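/- Let n ≥ 1 and let C : ℝ → Matrix (Fin n) ℝ take symmetric values and be differentiable at t₀ with derivative Ċ(t₀). Set λ(t) := inf{ v·C(t)v : v ∈ ℝⁿ, ‖v‖ = 1 } (the smallest eigenvalue of C(t)), let E be the eigenspace of C(t₀) for the eigenvalue λ(t₀), and set τ := min{ e·Ċ(t₀)e : e ∈ E, ‖e‖ = 1 }. Then limsup_{h→0⁺} (λ(t₀+h) − λ(t₀))/h ≤ τ. -/

import Mathlib

/-!
For a unit vector `e` with `e ⬝ᵥ C t₀ *ᵥ e = λ t₀`, the definition of `λ` as an infimum gives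
`λ (t₀ + h) ≤ e ⬝ᵥ C (t₀ + h) *ᵥ e`, so for `h > 0` the difference quotients of `λ` are bounded
above by those of `t ↦ e ⬝ᵥ C t *ᵥ e`, which converge to `e ⬝ᵥ Ċ(t₀) *ᵥ e`. The unit eigenvectors
of `C t₀` for `λ t₀` are exactly such vectors, and there is one: by compactness `λ t₀` is attained
on the unit sphere, and `C t₀ - λ t₀ • 1` is positive semidefinite, so a vector on which its
quadratic form vanishes lies in its kernel. For the `limsup` in `ℝ` to be the true one, the
quotients must also be bounded below, which holds because `λ` is Lipschitz in the matrix entries.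
-/

open Matrix Filter

/-- The Euclidean norm of a vector in `ℝⁿ`. -/
noncomputable def euclNorm {n : ℕ} (v : Fin n → ℝ) : ℝ := Real.sqrt (∑ i, v i ^ 2)

open Topology

noncomputable def rayleighInf {n : ℕ} (A : Matrix (Fin n) (Fin n) ℝ) : ℝ :=
  sInf {x | ∃ v : Fin n → ℝ, euclNorm v = 1 ∧ x = v ⬝ᵥ A *ᵥ v}

section UnitSphere

variable {n : ℕ}

lemma euclNorm_eq_one_iff {v : Fin n → ℝ} : euclNorm v = 1 ↔ v ⬝ᵥ v = 1 := by
  simp [euclNorm, Real.sqrt_eq_one, dotProduct, sq]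

lemma abs_le_one_of_dotProduct_self_eq_one {v : Fin n → ℝ} (hv : v ⬝ᵥ v = 1) (i : Fin n) :
    |v i| ≤ 1 := by
  have : v i * v i ≤ v ⬝ᵥ v :=
    Finset.single_le_sum (f := fun j => v j * v j) (fun j _ => mul_self_nonneg (v j))
      (Finset.mem_univ i)
  exact abs_le_one_iff_mul_self_le_one.mpr (hv ▸ this)

lemma isCompact_setOf_dotProduct_self_eq_one : IsCompact {v : Fin n → ℝ | v ⬝ᵥ v = 1} := by
  refine Metric.isCompact_of_isClosed_isBounded
    (isClosed_eq (by fun_prop) continuous_const) ?_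
  refine isBounded_iff_forall_norm_le.mpr ⟨1, fun v hv => ?_⟩
  exact pi_norm_le_iff_of_nonneg zero_le_one |>.mpr
    fun i => (Real.norm_eq_abs _).trans_le (abs_le_one_of_dotProduct_self_eq_one hv i)

lemma abs_dotProduct_mulVec_le (A : Matrix (Fin n) (Fin n) ℝ) {v : Fin n → ℝ}
    (hv : v ⬝ᵥ v = 1) : |v ⬝ᵥ A *ᵥ v| ≤ ∑ i, ∑ j, |A i j| := by
  have hcoord := abs_le_one_of_dotProduct_self_eq_one hv
  calc |v ⬝ᵥ A *ᵥ v| = |∑ i, ∑ j, v i * (A i j * v j)| := by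
        simp only [dotProduct, mulVec, Finset.mul_sum]
    _ ≤ ∑ i, ∑ j, |v i * (A i j * v j)| :=
        (Finset.abs_sum_le_sum_abs _ _).trans
          (Finset.sum_le_sum fun i _ => Finset.abs_sum_le_sum_abs _ _)
    _ ≤ ∑ i, ∑ j, |A i j| := by
        refine Finset.sum_le_sum fun i _ => Finset.sum_le_sum fun j _ => ?_
        rw [abs_mul, abs_mul]
        calc |v i| * (|A i j| * |v j|) ≤ 1 * (|A i j| * 1) := by
              gcongr
              exacts [hcoord i, hcoord j]
          _ = |A i j| := by ring

end UnitSphere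

section RayleighInf

variable {n : ℕ} (A : Matrix (Fin n) (Fin n) ℝ)

lemma rayleighInf_le {v : Fin n → ℝ} (hv : euclNorm v = 1) : rayleighInf A ≤ v ⬝ᵥ A *ᵥ v := by
  refine csInf_le ⟨-∑ i, ∑ j, |A i j|, ?_⟩ ⟨v, hv, rfl⟩
  rintro _ ⟨w, hw, rfl⟩
  exact neg_le_of_abs_le (abs_dotProduct_mulVec_le A (euclNorm_eq_one_iff.mp hw))

lemma exists_dotProduct_mulVec_eq_rayleighInf (hn : 1 ≤ n) :
    ∃ e : Fin n → ℝ, euclNorm e = 1 ∧ e ⬝ᵥ A *ᵥ e = rayleighInf A := by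
  have hne : {v : Fin n → ℝ | v ⬝ᵥ v = 1}.Nonempty :=
    ⟨Pi.single ⟨0, hn⟩ 1, by simp⟩
  obtain ⟨e, he, hmin⟩ := isCompact_setOf_dotProduct_self_eq_one.exists_isMinOn hne
    (f := fun v => v ⬝ᵥ A *ᵥ v) (by fun_prop)
  have he1 := euclNorm_eq_one_iff.mpr he
  refine ⟨e, he1, le_antisymm ?_ (rayleighInf_le A he1)⟩
  refine le_csInf ⟨_, e, he1, rfl⟩ ?_
  rintro _ ⟨v, hv, rfl⟩
  exact hmin (euclNorm_eq_one_iff.mp hv)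

lemma rayleighInf_mul_dotProduct_self_le (v : Fin n → ℝ) :
    rayleighInf A * (v ⬝ᵥ v) ≤ v ⬝ᵥ A *ᵥ v := by
  rcases eq_or_ne v 0 with rfl | hv
  · simp
  have hpos : 0 < v ⬝ᵥ v := by
    have : 0 ≤ v ⬝ᵥ v := by simpa using dotProduct_star_self_nonneg v
    exact this.lt_of_ne' (dotProduct_self_eq_zero.not.mpr hv)
  set c := (Real.sqrt (v ⬝ᵥ v))⁻¹
  have hc : c * c * (v ⬝ᵥ v) = 1 := by
    rw [← mul_inv, Real.mul_self_sqrt hpos.le, inv_mul_cancel₀ hpos.ne']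
  have hu : euclNorm (c • v) = 1 := by
    rw [euclNorm_eq_one_iff, smul_dotProduct, dotProduct_smul, smul_eq_mul, smul_eq_mul,
      ← mul_assoc, hc]
  have := rayleighInf_le A hu
  rw [mulVec_smul, smul_dotProduct, dotProduct_smul, smul_eq_mul, smul_eq_mul, ← mul_assoc] at this
  calc rayleighInf A * (v ⬝ᵥ v) ≤ c * c * (v ⬝ᵥ A *ᵥ v) * (v ⬝ᵥ v) := by gcongr
    _ = v ⬝ᵥ A *ᵥ v := by rw [mul_right_comm, hc, one_mul]

lemma posSemidef_sub_rayleighInf_smul_one (hA : A.IsSymm) :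
    (A - rayleighInf A • 1).PosSemidef := by
  refine .of_dotProduct_mulVec_nonneg (by simpa using hA.sub (isSymm_one.smul _)) fun v => ?_
  simpa [sub_mulVec, dotProduct_sub, smul_mulVec, dotProduct_smul] using
    rayleighInf_mul_dotProduct_self_le A v

lemma exists_mulVec_eq_rayleighInf_smul (hn : 1 ≤ n) (hA : A.IsSymm) :
    ∃ e : Fin n → ℝ, A *ᵥ e = rayleighInf A • e ∧ euclNorm e = 1 := by
  obtain ⟨e, he, hmin⟩ := exists_dotProduct_mulVec_eq_rayleighInf A hn
  have hzero : star e ⬝ᵥ (A - rayleighInf A • 1) *ᵥ e = 0 := by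
    simp [sub_mulVec, dotProduct_sub, smul_mulVec, hmin, euclNorm_eq_one_iff.mp he]
  have := ((posSemidef_sub_rayleighInf_smul_one A hA).dotProduct_mulVec_zero_iff e).mp hzero
  exact ⟨e, by simpa [sub_mulVec, smul_mulVec, sub_eq_zero] using this, he⟩

lemma neg_sum_abs_sub_le_rayleighInf_sub (hn : 1 ≤ n) (B : Matrix (Fin n) (Fin n) ℝ) :
    -∑ i, ∑ j, |A i j - B i j| ≤ rayleighInf A - rayleighInf B := by
  obtain ⟨v, hv, hvA⟩ := exists_dotProduct_mulVec_eq_rayleighInf A hn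
  have hB := rayleighInf_le B hv
  have hAB := neg_le_of_abs_le (abs_dotProduct_mulVec_le (A - B) (euclNorm_eq_one_iff.mp hv))
  simp only [sub_mulVec, dotProduct_sub, Matrix.sub_apply] at hAB
  linarith

end RayleighInf

lemma HasDerivAt.tendsto_div_nhdsGT {f : ℝ → ℝ} {f' x : ℝ} (hf : HasDerivAt f f' x) :
    Tendsto (fun h => (f (x + h) - f x) / h) (𝓝[>] 0) (𝓝 f') := by
  simpa [div_eq_inv_mul] using hf.tendsto_slope_zero_right

section Derivative

variable {n : ℕ} {C : ℝ → Matrix (Fin n) (Fin n) ℝ} {C' : Matrix (Fin n) (Fin n) ℝ} {t₀ : ℝ}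

lemma hasDerivAt_dotProduct_mulVec
    (hC : ∀ i j, HasDerivAt (fun t => C t i j) (C' i j) t₀) (v w : Fin n → ℝ) :
    HasDerivAt (fun t => v ⬝ᵥ C t *ᵥ w) (v ⬝ᵥ C' *ᵥ w) t₀ := by
  simp only [dotProduct, mulVec, Finset.mul_sum]
  exact .fun_sum fun i _ => .fun_sum fun j _ => ((hC i j).mul_const (w j)).const_mul (v i)

lemma isBoundedUnder_ge_slope_rayleighInf
    (hC : ∀ i j, HasDerivAt (fun t => C t i j) (C' i j) t₀) (hn : 1 ≤ n) :
    IsBoundedUnder (· ≥ ·) (𝓝[>] 0)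
      (fun h => (rayleighInf (C (t₀ + h)) - rayleighInf (C t₀)) / h) := by
  have hlim : Tendsto (fun h => -∑ i, ∑ j, |(C (t₀ + h) i j - C t₀ i j) / h|) (𝓝[>] 0)
      (𝓝 (-∑ i, ∑ j, |C' i j|)) :=
    (tendsto_finsetSum _ fun i _ => tendsto_finsetSum _ fun j _ =>
      (hC i j).tendsto_div_nhdsGT.abs).neg
  refine hlim.isBoundedUnder_ge.mono_ge ?_
  filter_upwards [self_mem_nhdsWithin] with h (hh : 0 < h)
  have := div_le_div_of_nonneg_right
    (neg_sum_abs_sub_le_rayleighInf_sub (C (t₀ + h)) hn (C t₀)) hh.le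
  simpa [neg_div, Finset.sum_div, abs_div, abs_of_pos hh] using this

lemma limsup_slope_rayleighInf_le
    (hC : ∀ i j, HasDerivAt (fun t => C t i j) (C' i j) t₀) (hn : 1 ≤ n) {e : Fin n → ℝ}
    (he : euclNorm e = 1) (he₀ : e ⬝ᵥ C t₀ *ᵥ e = rayleighInf (C t₀)) :
    limsup (fun h => (rayleighInf (C (t₀ + h)) - rayleighInf (C t₀)) / h) (𝓝[>] 0)
      ≤ e ⬝ᵥ C' *ᵥ e := by
  have hq := (hasDerivAt_dotProduct_mulVec hC e e).tendsto_div_nhdsGT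
  refine (limsup_le_limsup ?_ (isBoundedUnder_ge_slope_rayleighInf hC hn).isCoboundedUnder_le
    hq.isBoundedUnder_le).trans_eq hq.limsup_eq
  filter_upwards [self_mem_nhdsWithin] with h (hh : 0 < h)
  rw [← he₀]
  gcongr
  exact rayleighInf_le _ he

end Derivative

theorem stmt1 (n : ℕ) (hn : 1 ≤ n) (C : ℝ → Matrix (Fin n) (Fin n) ℝ)
    (t₀ : ℝ) (C' : Matrix (Fin n) (Fin n) ℝ)
    (hsymm : ∀ t, (C t).IsSymm)
    (hderiv : ∀ i j, HasDerivAt (fun t => C t i j) (C' i j) t₀)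
    (lam : ℝ → ℝ)
    (hlam : ∀ t, lam t =
      sInf {x | ∃ v : Fin n → ℝ, euclNorm v = 1 ∧ x = v ⬝ᵥ (C t).mulVec v})
    (τ : ℝ)
    (hτ : τ = sInf {x | ∃ e : Fin n → ℝ, (C t₀).mulVec e = lam t₀ • e ∧
      euclNorm e = 1 ∧ x = e ⬝ᵥ C'.mulVec e}) :
    limsup (fun h : ℝ => (lam (t₀ + h) - lam t₀) / h) (nhdsWithin 0 (Set.Ioi 0)) ≤ τ := by
  obtain rfl : lam = fun t => rayleighInf (C t) := funext hlam
  obtain ⟨e₀, he₀, he₀_unit⟩ := exists_mulVec_eq_rayleighInf_smul (C t₀) hn (hsymm t₀)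
  rw [hτ]
  refine le_csInf ⟨_, e₀, he₀, he₀_unit, rfl⟩ ?_
  rintro _ ⟨e, he, he_unit, rfl⟩
  refine limsup_slope_rayleighInf_le hderiv hn he_unit ?_
  rw [he, dotProduct_smul, euclNorm_eq_one_iff.mp he_unit, smul_eq_mul, mul_one]
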